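/- arXiv:2307.07028 — 7 statements merged into one kernel-verified Lean document; each statement's English description precedes it below -/
import Mathlib

section
/- If f(z) = Σ a_n z^n is analytic in the unit disc with sup_{|z|<1} |f(z)| ≤ 1, then Σ |a_n| r^n ≤ 1 for all 0 ≤ r ≤ 1/3. -/
/-!
Everything rests on Wiener's inequality `‖a n‖ ≤ 2 (1 - ‖a 0‖)` for `n ≥ 1`: it gives
`∑ ‖a n‖ rⁿ ≤ ‖a 0‖ + (1 - ‖a 0‖) · 2r / (1 - r)`, and `2r / (1 - r) ≤ 1` exactly when `r ≤ 1/3`.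

For Wiener's inequality rotate `f` so that `a 0 = ‖a 0‖` and restrict it to the circle of radius
`ρ < 1`. The function `u = 1 - Re f` is nonnegative there, with mean `1 - ‖a 0‖`, and its `n`-th
Fourier coefficient is `-a n ρⁿ / 2`; the coefficient of a nonnegative function is bounded by its
mean. Letting `ρ → 1` finishes the proof.
-/

open Metric Filter Complex Topology
open scoped Real ComplexConjugate

lemma summable_norm_mul_pow_of_summable {α : Type*} [NormedDivisionRing α] {a : ℕ → α} {w : α}
    (h : Summable fun n => a n * w ^ n) {r : ℝ} (hr₀ : 0 ≤ r) (hr : r < ‖w‖) :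
    Summable fun n => ‖a n‖ * r ^ n := by
  have hw : 0 < ‖w‖ := hr₀.trans_lt hr
  obtain ⟨C, hC⟩ := h.tendsto_atTop_zero.norm.bddAbove_range
  refine .of_nonneg_of_le (fun n => by positivity) (fun n => ?_)
    ((summable_geometric_of_lt_one (by positivity) ((div_lt_one hw).2 hr)).mul_left C)
  have hCn : ‖a n‖ * ‖w‖ ^ n ≤ C := by simpa using hC (Set.mem_range_self n)
  calc ‖a n‖ * r ^ n = ‖a n‖ * ‖w‖ ^ n * (r / ‖w‖) ^ n := by
        rw [div_pow, mul_assoc, mul_div_cancel₀ _ (by positivity)]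
    _ ≤ C * (r / ‖w‖) ^ n := by gcongr

lemma integral_exp_int_mul_I {m : ℤ} (hm : m ≠ 0) :
    ∫ θ in 0..2 * π, exp (m * θ * I) = 0 := by
  have hc : (m : ℂ) * I ≠ 0 := by simp [hm]
  simp_rw [mul_right_comm _ _ I]
  rw [integral_exp_mul_complex hc]
  push_cast
  rw [show (m : ℂ) * I * (2 * π) = m * (2 * π * I) by ring, exp_int_mul_two_pi_mul_I]
  simp

lemma norm_le_two_mul_one_sub_re {F : ℝ → ℂ} (hF : Continuous F) (hre : ∀ θ, (F θ).re ≤ 1)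
    {m : ℤ} (hm : m ≠ 0) {b₀ b : ℂ}
    (h₀ : ∫ θ in 0..2 * π, F θ = 2 * π * b₀)
    (hneg : ∫ θ in 0..2 * π, F θ * exp (((-m : ℤ) : ℂ) * θ * I) = 2 * π * b)
    (hpos : ∫ θ in 0..2 * π, F θ * exp (m * θ * I) = 0) :
    ‖b‖ ≤ 2 * (1 - b₀.re) := by
  set e : ℝ → ℂ := fun θ => exp (((-m : ℤ) : ℂ) * θ * I)
  have he_norm : ∀ θ, ‖e θ‖ = 1 := fun θ => by simp [e, norm_exp]
  have he_conj : ∀ θ, conj (F θ) * e θ = conj (F θ * exp (m * θ * I)) := fun θ => by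
    simp only [e, map_mul, ← exp_conj, conj_I, conj_ofReal, map_intCast]
    push_cast; ring_nf
  set u : ℝ → ℝ := fun θ => 1 - (F θ).re
  have hu : ∀ θ, (u θ : ℂ) * e θ = e θ - (F θ * e θ) / 2 - conj (F θ) * e θ / 2 := fun θ => by
    simp only [u, ofReal_sub, ofReal_one, re_eq_add_conj]; ring
  have hint_ue : ∫ θ in 0..2 * π, (u θ : ℂ) * e θ = -(π * b) := by
    simp_rw [hu, he_conj]
    rw [intervalIntegral.integral_sub, intervalIntegral.integral_sub, intervalIntegral.integral_div,
      intervalIntegral.integral_div, intervalIntegral.intervalIntegral_conj, hneg, hpos,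
      integral_exp_int_mul_I (neg_ne_zero.2 hm)]
    · rw [map_zero]; ring
    all_goals exact Continuous.intervalIntegrable (by fun_prop) _ _
  have hint_u : ∫ θ in 0..2 * π, u θ = 2 * π * (1 - b₀.re) := by
    have hre_int := intervalIntegral.intervalIntegral_re
      (hF.intervalIntegrable (μ := MeasureTheory.volume) 0 (2 * π))
    simp only [RCLike.re_to_complex, h₀] at hre_int
    rw [intervalIntegral.integral_sub intervalIntegrable_const
      ((by fun_prop : Continuous fun θ => (F θ).re).intervalIntegrable _ _), hre_int]
    simp only [intervalIntegral.integral_const, sub_zero, smul_eq_mul, mul_one, mul_re, re_ofNat,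
      ofReal_re, im_ofNat, ofReal_im, mul_zero, mul_im, zero_mul, add_zero]
    ring
  have key : π * ‖b‖ ≤ 2 * π * (1 - b₀.re) :=
    calc π * ‖b‖ = ‖∫ θ in 0..2 * π, (u θ : ℂ) * e θ‖ := by
          rw [hint_ue, norm_neg, norm_mul, norm_real, Real.norm_of_nonneg Real.pi_pos.le]
      _ ≤ ∫ θ in 0..2 * π, ‖(u θ : ℂ) * e θ‖ :=
          intervalIntegral.norm_integral_le_integral_norm (by positivity)
      _ = ∫ θ in 0..2 * π, u θ := by
          congr 1; ext θ
          rw [norm_mul, he_norm, mul_one, norm_real, Real.norm_of_nonneg (by linarith [hre θ])]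
      _ = 2 * π * (1 - b₀.re) := hint_u
  exact le_of_mul_le_mul_left (by linarith) Real.pi_pos

section CircleFourier

variable {a : ℕ → ℂ} {ρ : ℝ} {F : ℝ → ℂ}

lemma hasSum_integral_mul_exp (hρ : 0 ≤ ρ) (hs : Summable fun k => ‖a k‖ * ρ ^ k)
    (hF : ∀ θ, HasSum (fun k => a k * circleMap 0 ρ θ ^ k) (F θ)) (m : ℤ) :
    HasSum (fun k : ℕ => a k * ρ ^ k * ∫ θ in 0..2 * π, exp (((k + m : ℤ) : ℂ) * θ * I))
      (∫ θ in 0..2 * π, F θ * exp (m * θ * I)) := by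
  have hterm : ∀ k θ, a k * circleMap 0 ρ θ ^ k * exp (m * θ * I)
      = a k * ρ ^ k * exp (((k + m : ℤ) : ℂ) * θ * I) := by
    intro k θ
    rw [circleMap_zero_pow, circleMap_zero, mul_assoc, mul_assoc, ← exp_add]
    push_cast
    ring_nf
  simp_rw [← intervalIntegral.integral_const_mul]
  refine intervalIntegral.hasSum_integral_of_dominated_convergence (fun k _ => ‖a k‖ * ρ ^ k)
    (fun k => (by fun_prop : Continuous _).aestronglyMeasurable) (fun k => .of_forall fun θ _ => ?_)
    (.of_forall fun _ _ => hs) intervalIntegrable_const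
    (.of_forall fun θ _ => by simpa only [hterm] using (hF θ).mul_right (exp (m * θ * I)))
  simp [norm_exp, abs_of_nonneg hρ]

lemma integral_mul_exp_neg_natCast (hρ : 0 ≤ ρ) (hs : Summable fun k => ‖a k‖ * ρ ^ k)
    (hF : ∀ θ, HasSum (fun k => a k * circleMap 0 ρ θ ^ k) (F θ)) (n : ℕ) :
    ∫ θ in 0..2 * π, F θ * exp (((-n : ℤ) : ℂ) * θ * I) = 2 * π * (a n * ρ ^ n) := by
  refine (hasSum_integral_mul_exp hρ hs hF (-n)).unique ?_
  convert hasSum_single n fun k hk => ?_ using 1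
  · simp only [add_neg_cancel, Int.cast_zero, zero_mul, exp_zero, intervalIntegral.integral_const,
      sub_zero, real_smul, ofReal_mul, ofReal_ofNat, mul_one]
    ring
  · rw [integral_exp_int_mul_I (by omega), mul_zero]

lemma integral_mul_exp_natCast (hρ : 0 ≤ ρ) (hs : Summable fun k => ‖a k‖ * ρ ^ k)
    (hF : ∀ θ, HasSum (fun k => a k * circleMap 0 ρ θ ^ k) (F θ)) {n : ℕ} (hn : n ≠ 0) :
    ∫ θ in 0..2 * π, F θ * exp (((n : ℤ) : ℂ) * θ * I) = 0 := by
  refine (hasSum_integral_mul_exp hρ hs hF n).unique ?_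
  convert hasSum_zero with k
  rw [integral_exp_int_mul_I (by omega), mul_zero]

lemma continuous_of_hasSum_circleMap (hρ : 0 ≤ ρ) (hs : Summable fun k => ‖a k‖ * ρ ^ k)
    (hF : ∀ θ, HasSum (fun k => a k * circleMap 0 ρ θ ^ k) (F θ)) : Continuous F := by
  rw [show F = fun θ => ∑' k, a k * circleMap 0 ρ θ ^ k from funext fun θ => (hF θ).tsum_eq.symm]
  exact continuous_tsum (fun k => by fun_prop) hs fun k θ => by simp [abs_of_nonneg hρ]

lemma norm_coeff_mul_pow_le (hρ : 0 ≤ ρ) (hs : Summable fun k => ‖a k‖ * ρ ^ k)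
    (hF : ∀ θ, HasSum (fun k => a k * circleMap 0 ρ θ ^ k) (F θ)) (hb : ∀ θ, ‖F θ‖ ≤ 1)
    {n : ℕ} (hn : n ≠ 0) :
    ‖a n‖ * ρ ^ n ≤ 2 * (1 - ‖a 0‖) := by
  set c := exp (-(arg (a 0) : ℂ) * I)
  have hc : ‖c‖ = 1 := by simp [c, norm_exp]
  have hca : c * a 0 = ‖a 0‖ := by
    conv_lhs => rw [← norm_mul_exp_arg_mul_I (a 0)]
    rw [mul_left_comm, ← exp_add]
    simp
  have hcs : Summable fun k => ‖c * a k‖ * ρ ^ k := by simpa [hc] using hs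
  have hcF : ∀ θ, HasSum (fun k => c * a k * circleMap 0 ρ θ ^ k) (c * F θ) := fun θ => by
    simpa only [mul_assoc] using (hF θ).mul_left c
  have h₀ := integral_mul_exp_neg_natCast hρ hcs hcF 0
  simp only [CharP.cast_eq_zero, neg_zero, Int.cast_zero, zero_mul, exp_zero, mul_one,
    pow_zero] at h₀
  have key := norm_le_two_mul_one_sub_re (continuous_of_hasSum_circleMap hρ hcs hcF)
    (fun θ => (re_le_norm _).trans (by simpa [hc] using hb θ)) (Int.natCast_ne_zero.2 hn) h₀
    (integral_mul_exp_neg_natCast hρ hcs hcF n) (integral_mul_exp_natCast hρ hcs hcF hn)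
  simpa [hc, hca, abs_of_nonneg hρ] using key

end CircleFourier

theorem norm_coeff_le_two_mul_one_sub_norm_coeff_zero {f : ℂ → ℂ} {a : ℕ → ℂ}
    (hf : ∀ z ∈ ball (0 : ℂ) 1, HasSum (fun n => a n * z ^ n) (f z))
    (hb : ∀ z ∈ ball (0 : ℂ) 1, ‖f z‖ ≤ 1) {n : ℕ} (hn : n ≠ 0) :
    ‖a n‖ ≤ 2 * (1 - ‖a 0‖) := by
  have hbound : ∀ ρ ∈ Set.Ico (0 : ℝ) 1, ‖a n‖ * ρ ^ n ≤ 2 * (1 - ‖a 0‖) := by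
    rintro ρ ⟨hρ₀, hρ₁⟩
    have hmem : ∀ θ, circleMap 0 ρ θ ∈ ball (0 : ℂ) 1 := by simp [abs_of_nonneg hρ₀, hρ₁]
    have hσ : (((1 + ρ) / 2 : ℝ) : ℂ) ∈ ball (0 : ℂ) 1 := by
      rw [mem_ball_zero_iff, norm_real, Real.norm_of_nonneg (by linarith)]; linarith
    have hs := summable_norm_mul_pow_of_summable (hf _ hσ).summable hρ₀
      (by rw [norm_real, Real.norm_of_nonneg (by linarith)]; linarith)
    exact norm_coeff_mul_pow_le hρ₀ hs (fun θ => hf _ (hmem θ)) (fun θ => hb _ (hmem θ)) hn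
  have hlim : Tendsto (fun ρ : ℝ => ‖a n‖ * ρ ^ n) (𝓝[<] 1) (𝓝 ‖a n‖) :=
    ((by fun_prop : Continuous fun ρ : ℝ => ‖a n‖ * ρ ^ n).tendsto' 1 _ (by simp)).mono_left
      nhdsWithin_le_nhds
  exact le_of_tendsto hlim (Filter.mem_of_superset (Ico_mem_nhdsLT zero_lt_one) hbound)

theorem tsum_norm_mul_pow_le_one {E : Type*} [SeminormedAddCommGroup E] {a : ℕ → E}
    (ha : ∀ n, n ≠ 0 → ‖a n‖ ≤ 2 * (1 - ‖a 0‖)) {r : ℝ} (hr₀ : 0 ≤ r) (hr : r ≤ 1 / 3) :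
    ∑' n, ‖a n‖ * r ^ n ≤ 1 := by
  set t := 1 - ‖a 0‖
  have ht : 0 ≤ t := by linarith [ha 1 one_ne_zero, norm_nonneg (a 1)]
  have hr₁ : r < 1 := by linarith
  have htail : ∀ k, ‖a (k + 1)‖ * r ^ (k + 1) ≤ 2 * t * r * r ^ k := fun k =>
    calc ‖a (k + 1)‖ * r ^ (k + 1) ≤ 2 * t * r ^ (k + 1) := by gcongr; exact ha _ k.succ_ne_zero
      _ = 2 * t * r * r ^ k := by ring
  have hgeom := (summable_geometric_of_lt_one hr₀ hr₁).mul_left (2 * t * r)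
  have hsum_tail := hgeom.of_nonneg_of_le (fun _ => by positivity) htail
  rw [((summable_nat_add_iff (f := fun n => ‖a n‖ * r ^ n) 1).1 hsum_tail).tsum_eq_zero_add]
  calc ‖a 0‖ * r ^ 0 + ∑' k, ‖a (k + 1)‖ * r ^ (k + 1)
      ≤ ‖a 0‖ + ∑' k, 2 * t * r * r ^ k := by
        rw [pow_zero, mul_one]; exact add_le_add_right (hsum_tail.tsum_le_tsum htail hgeom) _
    _ = ‖a 0‖ + t * (2 * r / (1 - r)) := by
        rw [tsum_mul_left, tsum_geometric_of_lt_one hr₀ hr₁]; ring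
    _ ≤ ‖a 0‖ + t * 1 := by
        gcongr; rw [div_le_one (by linarith)]; linarith
    _ = 1 := by ring

theorem bohr_classical (f : ℂ → ℂ) (a : ℕ → ℂ)
    (hf : ∀ z ∈ ball (0 : ℂ) 1, HasSum (fun n : ℕ => a n * z ^ n) (f z))
    (hb : ∀ z ∈ ball (0 : ℂ) 1, ‖f z‖ ≤ 1)
    (r : ℝ) (hr0 : 0 ≤ r) (hr : r ≤ 1 / 3) :
    ∑' n : ℕ, ‖a n‖ * r ^ n ≤ 1 :=
  tsum_norm_mul_pow_le_one
    (fun n hn => norm_coeff_le_two_mul_one_sub_norm_coeff_zero (n := n) hf hb hn) hr0 hr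
end

section
/- If (a_n) is a sequence of complex numbers such that Σ_{n≥1} n^2 |a_n|^2 r^{2n} ≤ r^2/(1-r^2)^2 for all 0 < r < 1, then Σ_{n≥1} n |a_n|^2 r^n ≤ r/(1-r) for all 0 < r < 1. -/
/-!
Substituting `r ↦ √r` turns the hypothesis into `∑ n² |aₙ|² tⁿ ≤ t / (1 - t)²`. For a finite
partial sum `f t = ∑ n |aₙ|² tⁿ` this reads `t f'(t) ≤ t / (1 - t)²`, i.e. `f' ≤ ((1 - t)⁻¹)'`, so
`(1 - t)⁻¹ - f` is monotone on `[0, r]` and `f r ≤ (1 - r)⁻¹ - 1 = r / (1 - r)`.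
-/

open Set

theorem summable_natCast_mul_mul_pow_of_lt {c : ℕ → ℝ} (hc : ∀ n, 0 ≤ c n) {r t : ℝ}
    (hs : Summable fun n => c n * r ^ n) (ht : 0 ≤ t) (htr : t < r) :
    Summable fun n : ℕ => (n : ℝ) * c n * t ^ n := by
  have hr : 0 < r := ht.trans_lt htr
  obtain ⟨C, hC⟩ := (tendsto_self_mul_const_pow_of_lt_one (div_nonneg ht hr.le)
    ((div_lt_one hr).2 htr)).bddAbove_range
  refine (hs.mul_left C).of_nonneg_of_le (fun n => by have := hc n; positivity) fun n => ?_
  calc (n : ℝ) * c n * t ^ n = (n * (t / r) ^ n) * (c n * r ^ n) := by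
        rw [div_pow]; field_simp
    _ ≤ C * (c n * r ^ n) := by
        have := hc n
        gcongr
        exact hC (mem_range_self n)

theorem sum_natCast_mul_mul_pow_le_of_sum_sq_le (c : ℕ → ℝ) (F : Finset ℕ) {r : ℝ} (hr0 : 0 ≤ r)
    (hr1 : r < 1) (h : ∀ t ∈ Ioo 0 r, ∑ n ∈ F, (n : ℝ) ^ 2 * c n * t ^ n ≤ t / (1 - t) ^ 2) :
    ∑ n ∈ F, (n : ℝ) * c n * r ^ n ≤ r / (1 - r) := by
  set f : ℝ → ℝ := fun t => ∑ n ∈ F, (n : ℝ) * c n * t ^ n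
  set f' : ℝ → ℝ := fun t => ∑ n ∈ F, (n : ℝ) * c n * (n * t ^ (n - 1))
  have hf : ∀ t, HasDerivAt f (f' t) t := fun t =>
    HasDerivAt.fun_sum fun n _ => (hasDerivAt_pow n t).const_mul _
  have hg : ∀ t < 1, HasDerivAt (fun t : ℝ => (1 - t)⁻¹) ((1 - t) ^ 2)⁻¹ t := fun t ht => by
    simpa using ((hasDerivAt_id' t).const_sub 1).fun_inv (sub_ne_zero.2 ht.ne')
  have hf'_le : ∀ t ∈ Ioo 0 r, f' t ≤ ((1 - t) ^ 2)⁻¹ := fun t ht => by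
    have htf' : t * f' t = ∑ n ∈ F, (n : ℝ) ^ 2 * c n * t ^ n := by
      rw [Finset.mul_sum]
      refine Finset.sum_congr rfl fun n _ => ?_
      rcases eq_or_ne n 0 with rfl | hn
      · simp
      · rw [← mul_pow_sub_one hn t]; ring
    refine le_of_mul_le_mul_left ?_ ht.1
    rw [htf', ← div_eq_mul_inv]
    exact h t ht
  have hmono : MonotoneOn (fun t => (1 - t)⁻¹ - f t) (Icc 0 r) := by
    have hr1' : ∀ t ∈ Icc 0 r, t < 1 := fun t ht => ht.2.trans_lt hr1
    refine monotoneOn_of_hasDerivWithinAt_nonneg (convex_Icc 0 r)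
      (fun t ht => ((hg t (hr1' t ht)).sub (hf t)).continuousAt.continuousWithinAt)
      (fun t ht => ((hg t ?_).sub (hf t)).hasDerivWithinAt) ?_
    · exact hr1' t (interior_subset ht)
    · rw [interior_Icc]
      exact fun t ht => sub_nonneg.2 (hf'_le t ht)
  have hf0 : f 0 = 0 := Finset.sum_eq_zero fun n _ => by rcases n with _ | n <;> simp
  have hr : r / (1 - r) = (1 - r)⁻¹ - 1 := by
    field_simp [(sub_pos.2 hr1).ne']
    ring
  have := hmono ⟨le_rfl, hr0⟩ ⟨hr0, le_rfl⟩ hr0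
  simp only [hf0, sub_zero, inv_one] at this
  linarith

theorem integrate_coefficient_bound (a : ℕ → ℂ)
    (h : ∀ r : ℝ, 0 < r → r < 1 →
      ∑' n : ℕ, (n : ℝ) ^ 2 * ‖a n‖ ^ 2 * r ^ (2 * n) ≤ r ^ 2 / (1 - r ^ 2) ^ 2) :
    ∀ r : ℝ, 0 < r → r < 1 →
      ∑' n : ℕ, (n : ℝ) * ‖a n‖ ^ 2 * r ^ n ≤ r / (1 - r) := by
  intro r hr0 hr1
  have h_sqrt : ∀ t : ℝ, 0 < t → t < 1 →
      ∑' n : ℕ, (n : ℝ) ^ 2 * ‖a n‖ ^ 2 * t ^ n ≤ t / (1 - t) ^ 2 := fun t ht0 ht1 => by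
    simpa only [pow_mul, Real.sq_sqrt ht0.le] using
      h √t (Real.sqrt_pos.2 ht0) ((Real.sqrt_lt' one_pos).2 (by simpa using ht1))
  -- The hypothesis carries no information where its series diverges (the `tsum` is then `0`);
  -- summability at `r` supplies summability at every `t < r`.
  by_cases hs : Summable fun n : ℕ => (n : ℝ) * ‖a n‖ ^ 2 * r ^ n
  · refine tsum_le_of_sum_le' (div_nonneg hr0.le (sub_pos.2 hr1).le) fun F =>
      sum_natCast_mul_mul_pow_le_of_sum_sq_le _ F hr0.le hr1 fun t ht => ?_
    have hs' : Summable fun n : ℕ => (n : ℝ) ^ 2 * ‖a n‖ ^ 2 * t ^ n :=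
      (summable_natCast_mul_mul_pow_of_lt (fun n => by positivity) hs ht.1.le ht.2).congr
        fun n => by ring
    refine (hs'.sum_le_tsum F fun n _ => ?_).trans (h_sqrt t ht.1 (ht.2.trans hr1))
    exact mul_nonneg (by positivity) (pow_nonneg ht.1.le n)
  · rw [tsum_eq_zero_of_not_summable hs]
    exact div_nonneg hr0.le (sub_pos.2 hr1).le
end

section
/- For any sequence (a_n) of complex numbers, any 0 ≤ r < 1, and any 0 ≤ R ≤ 1/√2, R · Σ_{n≥0} |a_n| (Rr)^n ≤ (Σ_{n≥0} |a_n|^2 r^{2n})^{1/2}. -/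
open ENNReal MeasureTheory

/-!
Write `R · (R r)ⁿ = rⁿ · R^(n+1)` and apply Cauchy–Schwarz to `∑ (|aₙ| rⁿ) · R^(n+1)`: the weight
factor is `(∑ R^(2(n+1)))^(1/2) = R / √(1 - R²)`, which is at most `1` exactly when `R² ≤ 1/2`.
Working in `ℝ≥0∞` makes every series summable, so no convergence hypothesis on `a` is needed.
-/

theorem ENNReal.inner_le_Lp_mul_Lq_tsum {ι : Type*} (f g : ι → ℝ≥0∞) {p q : ℝ}
    (hpq : p.HolderConjugate q) :
    ∑' i, f i * g i ≤ (∑' i, f i ^ p) ^ (1 / p) * (∑' i, g i ^ q) ^ (1 / q) := by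
  let _ : MeasurableSpace ι := ⊤
  simpa only [lintegral_count' measurable_from_top, Pi.mul_apply] using
    lintegral_mul_le_Lp_mul_Lq Measure.count hpq measurable_from_top.aemeasurable
      measurable_from_top.aemeasurable

theorem ENNReal.tsum_pow_succ_le_one {y : ℝ≥0∞} (hy : y ≤ 2⁻¹) : ∑' n : ℕ, y ^ (n + 1) ≤ 1 := by
  have h_half : (2⁻¹ : ℝ≥0∞) ≤ 1 - y := by
    simpa [ENNReal.one_sub_inv_two] using tsub_le_tsub_left hy 1
  calc ∑' n : ℕ, y ^ (n + 1) = y * (1 - y)⁻¹ := by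
        simp_rw [pow_succ']; rw [ENNReal.tsum_mul_left, ENNReal.tsum_geometric]
    _ ≤ 2⁻¹ * 2 := by gcongr; simpa using ENNReal.inv_le_inv.mpr h_half
    _ = 1 := ENNReal.inv_mul_cancel (by norm_num) (by norm_num)

theorem ENNReal.tsum_mul_pow_succ_le_rpow_tsum_sq (f : ℕ → ℝ≥0∞) {x : ℝ≥0∞} (hx : x ^ 2 ≤ 2⁻¹) :
    ∑' n, f n * x ^ (n + 1) ≤ (∑' n, f n ^ 2) ^ ((1 : ℝ) / 2) := by
  have h_weight : ∑' n : ℕ, (x ^ (n + 1)) ^ 2 ≤ 1 := by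
    simp_rw [← pow_mul, mul_comm _ 2, pow_mul]
    exact ENNReal.tsum_pow_succ_le_one hx
  have h_cs := ENNReal.inner_le_Lp_mul_Lq_tsum f (fun n ↦ x ^ (n + 1)) .two_two
  simp only [ENNReal.rpow_two] at h_cs
  exact h_cs.trans (mul_le_of_le_one_right' (ENNReal.rpow_le_one h_weight (by norm_num)))

theorem ENNReal.ofReal_sq_le_inv_two {R : ℝ} (hR : R ≤ 1 / Real.sqrt 2) :
    ENNReal.ofReal R ^ 2 ≤ 2⁻¹ := by
  have h_sq : (1 / Real.sqrt 2) ^ 2 = 2⁻¹ := by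
    rw [div_pow, Real.sq_sqrt zero_le_two, one_pow, one_div]
  calc ENNReal.ofReal R ^ 2 ≤ ENNReal.ofReal (1 / Real.sqrt 2) ^ 2 := by gcongr
    _ = 2⁻¹ := by
      rw [← ENNReal.ofReal_pow (by positivity), h_sq, ENNReal.ofReal_inv_of_pos two_pos,
        ENNReal.ofReal_ofNat]

theorem cauchy_schwarz_bohr_step_general (a : ℕ → ℂ) (r R : ℝ)
    (hr0 : 0 ≤ r) (hR0 : 0 ≤ R) (hR : R ≤ 1 / Real.sqrt 2) :
    ENNReal.ofReal R * ∑' n : ℕ, (‖a n‖₊ : ℝ≥0∞) * ENNReal.ofReal ((R * r) ^ n) ≤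
      (∑' n : ℕ, (‖a n‖₊ : ℝ≥0∞) ^ 2 * ENNReal.ofReal (r ^ (2 * n))) ^ ((1 : ℝ) / 2) := by
  have h_lhs : ENNReal.ofReal R * ∑' n : ℕ, (‖a n‖₊ : ℝ≥0∞) * ENNReal.ofReal ((R * r) ^ n) =
      ∑' n, (‖a n‖₊ * ENNReal.ofReal r ^ n) * ENNReal.ofReal R ^ (n + 1) := by
    rw [← ENNReal.tsum_mul_left]
    congr 1 with n
    rw [mul_pow, ENNReal.ofReal_mul (pow_nonneg hR0 n), ENNReal.ofReal_pow hR0,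
      ENNReal.ofReal_pow hr0, pow_succ]
    ring
  have h_rhs (n : ℕ) : ((‖a n‖₊ : ℝ≥0∞) * ENNReal.ofReal r ^ n) ^ 2 =
      (‖a n‖₊ : ℝ≥0∞) ^ 2 * ENNReal.ofReal (r ^ (2 * n)) := by
    rw [mul_pow, ← pow_mul, mul_comm n, ENNReal.ofReal_pow hr0]
  rw [h_lhs, ← tsum_congr h_rhs]
  exact ENNReal.tsum_mul_pow_succ_le_rpow_tsum_sq _ (ENNReal.ofReal_sq_le_inv_two hR)

theorem cauchy_schwarz_bohr_step (a : ℕ → ℂ) (r R : ℝ)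
    (hr0 : 0 ≤ r) (hr1 : r < 1) (hR0 : 0 ≤ R) (hR : R ≤ 1 / Real.sqrt 2) :
    ENNReal.ofReal R * ∑' n : ℕ, (‖a n‖₊ : ℝ≥0∞) * ENNReal.ofReal ((R * r) ^ n) ≤
      (∑' n : ℕ, (‖a n‖₊ : ℝ≥0∞) ^ 2 * ENNReal.ofReal (r ^ (2 * n))) ^ ((1 : ℝ) / 2) :=
  cauchy_schwarz_bohr_step_general a r R hr0 hR0 hR
end

section
/- Let ω : [0,1) → [0,∞) be any weight and let f(z) = Σ a_n z^n be analytic on 𝔻 with |a_0| + sup_{|z|<1} ω(|z|)|f'(z)| ≤ 1. Then the function g(z) = Σ |a_n| (z/√2)^n satisfies |g(0)| + sup_{|z|<1} ω(|z|)|g'(z)| ≤ 1. -/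
/-!
Fix `z` with `‖z‖ = r` and `ω r > 0`, and put `M = (1 - ‖a 0‖) / ω r`, so that `‖f'‖ ≤ M` on the
circle `‖w‖ = r`. Restricted to that circle, `f'(w) = ∑ (n + 1) a (n + 1) wⁿ` is a one-sided
Fourier series, and Bessel's inequality for the Fourier basis of `L²` of the circle gives
Gutzmer's inequality `∑ ((n + 1) ‖a (n + 1)‖ rⁿ)² ≤ M²`. The derivative of the majorant at `z` is
at most `∑ (n + 1) ‖a (n + 1)‖ rⁿ / √2 ^ (n + 1)`, and Cauchy–Schwarz together with
`∑ 2 ^ (-(n + 1)) = 1` bounds this by `M`.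
-/

open Metric Complex AddCircle MeasureTheory

section Bessel

variable {T : ℝ} [Fact (0 < T)]

theorem inner_fourierLp_toLp_of_hasSum {β : ℕ → ℂ} {U : C(AddCircle T, ℂ)}
    (hU : HasSum (fun n : ℕ => β n • fourier n) U) (m : ℕ) :
    inner ℂ (fourierLp 2 m) (ContinuousMap.toLp 2 haarAddCircle ℂ U) = β m := by
  have h := (hU.mapL (ContinuousMap.toLp 2 haarAddCircle ℂ)).mapL (innerSL ℂ (fourierLp 2 m))
  simp only [map_smul, innerSL_apply_apply, orthonormal_iff_ite.mp orthonormal_fourier,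
    Nat.cast_inj, smul_eq_mul, mul_ite, mul_one, mul_zero] at h
  exact (h.unique (hasSum_single m fun n hn => if_neg (Ne.symm hn))).trans (if_pos rfl)

theorem sum_sq_norm_le_of_norm_tsum_fourier_le {β : ℕ → ℂ} (hβ : Summable fun n => ‖β n‖)
    {M : ℝ} (hM : ∀ t : AddCircle T, ‖∑' n : ℕ, β n * fourier n t‖ ≤ M) (s : Finset ℕ) :
    ∑ n ∈ s, ‖β n‖ ^ 2 ≤ M ^ 2 := by
  obtain ⟨U, hU⟩ : Summable fun n : ℕ => β n • fourier (T := T) n :=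
    .of_norm (by simpa only [norm_smul, fourier_norm, mul_one] using hβ)
  have hUM : ‖U‖ ≤ M := by
    refine (ContinuousMap.norm_le U ((norm_nonneg _).trans (hM 0))).mpr fun t => ?_
    have ht := hU.map (ContinuousMap.evalCLM ℂ t) (ContinuousMap.evalCLM ℂ t).continuous
    simp only [Function.comp_def, map_smul, ContinuousMap.evalCLM_apply, smul_eq_mul] at ht
    exact ht.tsum_eq ▸ hM t
  have hLp : ‖ContinuousMap.toLp 2 haarAddCircle ℂ U‖ ≤ ‖U‖ := by
    simpa [measureUnivNNReal] using Lp.norm_le_of_ae_bound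
      (f := ContinuousMap.toLp 2 haarAddCircle ℂ U) (norm_nonneg U)
      ((ContinuousMap.coeFn_toLp haarAddCircle U).mono fun t ht => ht ▸ U.norm_coe_le_norm t)
  have hbessel := ((orthonormal_fourier (T := T)).comp _ Nat.cast_injective).sum_inner_products_le
    (ContinuousMap.toLp 2 haarAddCircle ℂ U) (s := s)
  simp only [Function.comp_apply, inner_fourierLp_toLp_of_hasSum hU] at hbessel
  exact hbessel.trans (pow_le_pow_left₀ (norm_nonneg _) (hLp.trans hUM) 2)

end Bessel

theorem fourier_natCast_apply {T : ℝ} (n : ℕ) (t : AddCircle T) :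
    fourier n t = (toCircle t : ℂ) ^ n := by
  rw [fourier_apply, natCast_zsmul, toCircle_nsmul, Circle.coe_pow]

theorem sum_sq_norm_mul_pow_le_of_norm_tsum_le {b : ℕ → ℂ} {r M : ℝ} (hr : 0 ≤ r)
    (hb : Summable fun n => ‖b n‖ * r ^ n)
    (hM : ∀ w : ℂ, ‖w‖ = r → ‖∑' n, b n * w ^ n‖ ≤ M) (s : Finset ℕ) :
    ∑ n ∈ s, (‖b n‖ * r ^ n) ^ 2 ≤ M ^ 2 := by
  have hnorm (n : ℕ) : ‖b n * (r : ℂ) ^ n‖ = ‖b n‖ * r ^ n := by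
    rw [norm_mul, norm_pow, Complex.norm_of_nonneg hr]
  simp only [← hnorm]
  refine sum_sq_norm_le_of_norm_tsum_fourier_le (T := 1) (by simpa only [hnorm] using hb)
    (fun t => ?_) s
  have hw : ‖(r : ℂ) * toCircle t‖ = r := by
    rw [norm_mul, Circle.norm_coe, mul_one, Complex.norm_of_nonneg hr]
  simpa only [fourier_natCast_apply, mul_pow, mul_assoc] using hM _ hw

theorem summable_norm_mul_pow_of_summable_on_ball {a : ℕ → ℂ}
    (ha : ∀ z ∈ ball (0 : ℂ) 1, Summable fun n => a n * z ^ n) (ρ : ℝ) (hρ0 : 0 ≤ ρ)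
    (hρ1 : ρ < 1) : Summable fun n => ‖a n‖ * ρ ^ n := by
  have hρ : (ρ : ℂ) ∈ ball (0 : ℂ) 1 := by simpa [abs_of_nonneg hρ0] using hρ1
  simpa [abs_of_nonneg hρ0] using (ha ρ hρ).norm

theorem hasSum_deriv_tsum_mul_pow {c : ℕ → ℂ}
    (hc : ∀ ρ : ℝ, 0 ≤ ρ → ρ < 1 → Summable fun n => ‖c n‖ * ρ ^ n) {z : ℂ} (hz : ‖z‖ < 1) :
    HasSum (fun n : ℕ => (n + 1) * c (n + 1) * z ^ n) (deriv (fun w => ∑' n, c n * w ^ n) z) := by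
  obtain ⟨ρ, hzρ, hρ1⟩ := exists_between hz
  have hbound (n : ℕ) (w : ℂ) (hw : w ∈ ball 0 ρ) : ‖c n * w ^ n‖ ≤ ‖c n‖ * ρ ^ n := by
    rw [norm_mul, norm_pow]
    exact mul_le_mul_of_nonneg_left
      (pow_le_pow_left₀ (norm_nonneg w) (mem_ball_zero_iff.mp hw).le n) (norm_nonneg _)
  have h := hasSum_deriv_of_summable_norm (z := z) (hc ρ ((norm_nonneg z).trans hzρ.le) hρ1)
    (fun n => ((differentiable_const _).mul (differentiable_pow n)).differentiableOn)
    isOpen_ball hbound (mem_ball_zero_iff.mpr hzρ)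
  simp only [deriv_const_mul_field', deriv_pow_field] at h
  have h1 := (hasSum_nat_add_iff' 1).mpr h
  simp only [Finset.range_one, Finset.sum_singleton, CharP.cast_eq_zero, zero_mul, mul_zero,
    sub_zero, Nat.cast_add, Nat.cast_one, add_tsub_cancel_right] at h1
  simpa only [mul_left_comm _ (c _), mul_assoc] using h1

theorem sum_mul_le_of_sum_sq_le {ι : Type*} {x y : ι → ℝ} {M : ℝ} (hM : 0 ≤ M)
    (hx : ∀ s : Finset ι, ∑ i ∈ s, x i ^ 2 ≤ M ^ 2) (hy : ∀ s : Finset ι, ∑ i ∈ s, y i ^ 2 ≤ 1)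
    (s : Finset ι) : ∑ i ∈ s, x i * y i ≤ M :=
  calc ∑ i ∈ s, x i * y i ≤ √(∑ i ∈ s, x i ^ 2) * √(∑ i ∈ s, y i ^ 2) :=
        Real.sum_mul_le_sqrt_mul_sqrt s x y
    _ ≤ √(M ^ 2) * √1 := by gcongr <;> [exact hx s; exact hy s]
    _ = M := by rw [Real.sqrt_sq hM, Real.sqrt_one, mul_one]

theorem sum_sq_inv_sqrt_two_pow_succ_le_one (s : Finset ℕ) :
    ∑ n ∈ s, ((√2 ^ (n + 1))⁻¹) ^ 2 ≤ 1 := by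
  have h (n : ℕ) : ((√2 ^ (n + 1))⁻¹) ^ 2 = 1 / 2 / 2 ^ n := by
    rw [inv_pow, ← pow_mul, mul_comm, pow_mul, Real.sq_sqrt zero_le_two, pow_succ]
    field_simp
  simp only [h]
  exact ((summable_geometric_two' 1).sum_le_tsum s fun n _ => by positivity).trans_eq
    (tsum_geometric_two' 1)

theorem norm_deriv_majorant_le {a : ℕ → ℂ}
    (ha : ∀ ρ : ℝ, 0 ≤ ρ → ρ < 1 → Summable fun n => ‖a n‖ * ρ ^ n) {z : ℂ} (hz : ‖z‖ < 1)
    {M : ℝ} (hM : ∀ w : ℂ, ‖w‖ = ‖z‖ → ‖deriv (fun w => ∑' n, a n * w ^ n) w‖ ≤ M) :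
    ‖deriv (fun w : ℂ => ∑' n, (‖a n‖ : ℂ) * (w / √2) ^ n) z‖ ≤ M := by
  set c : ℕ → ℂ := fun n => ‖a n‖ / (√2 : ℂ) ^ n
  set b : ℕ → ℂ := fun n => (n + 1) * a (n + 1)
  have hM0 : 0 ≤ M := (norm_nonneg _).trans (hM z rfl)
  have hcnorm (n : ℕ) : ‖c n‖ = ‖a n‖ / √2 ^ n := by
    simp [c, abs_of_nonneg (Real.sqrt_nonneg 2)]
  have hc (ρ : ℝ) (hρ0 : 0 ≤ ρ) (hρ1 : ρ < 1) : Summable fun n => ‖c n‖ * ρ ^ n :=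
    (ha ρ hρ0 hρ1).of_nonneg_of_le (fun n => by positivity) fun n => by
      rw [hcnorm]
      gcongr
      exact div_le_self (norm_nonneg _) (one_le_pow₀ (Real.one_le_sqrt.mpr one_le_two))
  have hf' (w : ℂ) (hw : ‖w‖ < 1) :
      HasSum (fun n => b n * w ^ n) (deriv (fun w => ∑' n, a n * w ^ n) w) :=
    hasSum_deriv_tsum_mul_pow ha hw
  have hb : Summable fun n => ‖b n‖ * ‖z‖ ^ n := by
    simpa only [norm_mul, norm_pow, Complex.norm_real, norm_norm] using
      (hf' (‖z‖ : ℂ) (by simpa using hz)).summable.norm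
  have hgutzmer := sum_sq_norm_mul_pow_le_of_norm_tsum_le (norm_nonneg z) hb fun w hw =>
    (hf' w (hw ▸ hz)).tsum_eq ▸ hM w hw
  have hterm (n : ℕ) :
      ‖(n + 1) * c (n + 1) * z ^ n‖ = ‖b n‖ * ‖z‖ ^ n * (√2 ^ (n + 1))⁻¹ := by
    simp only [b, norm_mul, hcnorm, norm_pow]
    ring
  have hsum := sum_mul_le_of_sum_sq_le hM0 hgutzmer sum_sq_inv_sqrt_two_pow_succ_le_one
  simp only [← hterm] at hsum
  have hG : (fun w : ℂ => ∑' n, (‖a n‖ : ℂ) * (w / √2) ^ n) = fun w => ∑' n, c n * w ^ n := by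
    ext w
    simp only [c, div_pow, mul_div, div_mul_eq_mul_div]
  rw [hG, ← (hasSum_deriv_tsum_mul_pow hc hz).tsum_eq]
  exact (norm_tsum_le_tsum_norm (summable_of_sum_le (fun _ => norm_nonneg _) hsum)).trans
    (tsum_le_of_sum_le' hM0 hsum)

theorem norm_tsum_mul_zero_pow (a : ℕ → ℂ) : ‖∑' n, a n * 0 ^ n‖ = ‖a 0‖ := by
  rw [tsum_eq_single 0 fun n hn => by simp [hn], pow_zero, mul_one]

theorem bohr_weighted_bloch (ω : ℝ → ℝ) (hω : ∀ r ∈ Set.Ico (0 : ℝ) 1, 0 ≤ ω r)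
    (f : ℂ → ℂ) (a : ℕ → ℂ)
    (hf : ∀ z ∈ ball (0 : ℂ) 1, HasSum (fun n : ℕ => a n * z ^ n) (f z))
    (hb : ∀ z ∈ ball (0 : ℂ) 1, ‖a 0‖ + ω ‖z‖ * ‖deriv f z‖ ≤ 1) :
    ∀ z ∈ ball (0 : ℂ) 1,
      ‖(fun w : ℂ => ∑' n : ℕ, (‖a n‖ : ℂ) * (w / Real.sqrt 2) ^ n) 0‖ +
        ω ‖z‖ * ‖deriv (fun w : ℂ => ∑' n : ℕ, (‖a n‖ : ℂ) * (w / Real.sqrt 2) ^ n) z‖ ≤ 1 := by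
  intro z hz
  have hz1 : ‖z‖ < 1 := mem_ball_zero_iff.mp hz
  have ha0 : ‖a 0‖ ≤ 1 := by
    have := mul_nonneg (hω ‖(0 : ℂ)‖ (by simp)) (norm_nonneg (deriv f 0))
    linarith [hb 0 (mem_ball_self one_pos)]
  simp only [zero_div, norm_tsum_mul_zero_pow, norm_real, norm_norm]
  rcases (hω ‖z‖ ⟨norm_nonneg z, hz1⟩).eq_or_lt with hωz | hωz
  · simpa [← hωz] using ha0
  have hM (w : ℂ) (hw : ‖w‖ = ‖z‖) :
      ‖deriv (fun w => ∑' n, a n * w ^ n) w‖ ≤ (1 - ‖a 0‖) / ω ‖z‖ := by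
    have hw1 : w ∈ ball (0 : ℂ) 1 := mem_ball_zero_iff.mpr (hw ▸ hz1)
    have hfw : deriv f w = deriv (fun w => ∑' n, a n * w ^ n) w :=
      Filter.EventuallyEq.deriv_eq <| Filter.eventually_of_mem (isOpen_ball.mem_nhds hw1)
        fun x hx => (hf x hx).tsum_eq.symm
    rw [le_div_iff₀ hωz, ← hfw, mul_comm, ← hw]
    linarith [hb w hw1]
  have hg := norm_deriv_majorant_le
    (summable_norm_mul_pow_of_summable_on_ball fun w hw => (hf w hw).summable) hz1 hM
  rw [le_div_iff₀ hωz] at hg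
  linarith
end

section
/- Fix r_0 ∈ [1/√2, 1) and α ≥ 1, and define ω(r) = 1 for r ≤ r_0 and ω(r) = ((1-r)/(1-r_0))^α for r_0 ≤ r < 1. Then ω(r)/ω(r_0) ≤ min(2 - r/r_0, (√2 r_0 + r)/(√2 r + r_0)) for all r ∈ [0,1). -/
theorem piecewise_weight_satisfies_condition (r₀ α : ℝ)
    (hr₀ : r₀ ∈ Set.Ico (1 / Real.sqrt 2) 1) (hα : 1 ≤ α)
    (ω : ℝ → ℝ)
    (hω : ∀ r ∈ Set.Ico (0 : ℝ) 1,
      ω r = if r ≤ r₀ then 1 else ((1 - r) / (1 - r₀)) ^ α) :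
    ∀ r ∈ Set.Ico (0 : ℝ) 1,
      ω r / ω r₀ ≤ min (2 - r / r₀) ((Real.sqrt 2 * r₀ + r) / (Real.sqrt 2 * r + r₀)) := by
  intro r hr
  obtain ⟨hr0, hr1⟩ := hr
  obtain ⟨hl, hu⟩ := hr₀
  have hs2 : Real.sqrt 2 ^ 2 = 2 := Real.sq_sqrt (by norm_num)
  have hsnn : 0 ≤ Real.sqrt 2 := Real.sqrt_nonneg 2
  have hspos : 0 < Real.sqrt 2 := Real.sqrt_pos.mpr (by norm_num)
  have hs1 : (1:ℝ) < Real.sqrt 2 := by nlinarith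
  have hr₀pos : 0 < r₀ := lt_of_lt_of_le (by positivity) hl
  have hkey : 1 ≤ r₀ * Real.sqrt 2 := (div_le_iff₀ hspos).mp hl
  have hωr₀ : ω r₀ = 1 := by
    rw [hω r₀ ⟨hr₀pos.le, hu⟩, if_pos le_rfl]
  rw [hωr₀, div_one, hω r ⟨hr0, hr1⟩]
  have hden : 0 < Real.sqrt 2 * r + r₀ := by positivity
  by_cases hc : r ≤ r₀
  · rw [if_pos hc]
    refine le_min ?_ ?_
    · have : r / r₀ ≤ 1 := (div_le_one hr₀pos).mpr hc
      linarith
    · rw [le_div_iff₀ hden, one_mul]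
      nlinarith
  · rw [if_neg hc]
    push_neg at hc
    set t : ℝ := (1 - r) / (1 - r₀) with ht
    have h1r : 0 < 1 - r := by linarith
    have h1r₀ : 0 < 1 - r₀ := by linarith
    have htpos : 0 < t := by positivity
    have ht1 : t ≤ 1 := by
      rw [ht, div_le_one h1r₀]; linarith
    have hstep : t ^ α ≤ t := by
      calc t ^ α ≤ t ^ (1:ℝ) :=
            Real.rpow_le_rpow_of_exponent_ge htpos ht1 hα
        _ = t := Real.rpow_one t
    refine le_min (hstep.trans ?_) (hstep.trans ?_)
    · rw [ht, div_le_iff₀ h1r₀]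
      have h12 : 1 ≤ 2 * r₀ := by nlinarith
      have hrr : r / r₀ * r₀ = r := div_mul_cancel₀ r hr₀pos.ne'
      nlinarith [mul_nonneg (sub_nonneg.mpr hc.le) (sub_nonneg.mpr h12), hrr,
        mul_pos hr₀pos h1r₀]
    · rw [ht, div_le_div_iff₀ h1r₀ hden]
      have hsum : Real.sqrt 2 ≤ r + r₀ := by nlinarith
      nlinarith [mul_nonneg (sub_nonneg.mpr hc.le)
        (by nlinarith : (0:ℝ) ≤ Real.sqrt 2 * (r + r₀) - (Real.sqrt 2 - 1))]
end

section
/- Fix r_0 ∈ [1/√2, 1) and α ≥ 1, and define ω(r) = (1 - |(r - r_0)/(1 - r_0 r)|)^α for r ∈ [0,1). Then ω(r)/ω(r_0) ≤ min(2 - r/r_0, (√2 r_0 + r)/(√2 r + r_0)) for all r ∈ [0,1). -/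
theorem pseudohyperbolic_weight_satisfies_condition (r₀ α : ℝ)
    (hr₀ : r₀ ∈ Set.Ico (1 / Real.sqrt 2) 1) (hα : 1 ≤ α)
    (ω : ℝ → ℝ)
    (hω : ∀ r ∈ Set.Ico (0 : ℝ) 1,
      ω r = (1 - |(r - r₀) / (1 - r₀ * r)|) ^ α) :
    ∀ r ∈ Set.Ico (0 : ℝ) 1,
      ω r / ω r₀ ≤ min (2 - r / r₀) ((Real.sqrt 2 * r₀ + r) / (Real.sqrt 2 * r + r₀)) := by
  obtain ⟨hr₀1, hr₀2⟩ := hr₀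
  set s := Real.sqrt 2 with hs
  have hs2 : s ^ 2 = 2 := Real.sq_sqrt (by norm_num)
  have hs1 : 1 ≤ s := by nlinarith [Real.sqrt_nonneg 2]
  have hspos : 0 < s := by linarith
  have hr₀pos : 0 < r₀ := lt_of_lt_of_le (by positivity) hr₀1
  have hsr : 1 ≤ s * r₀ := by
    rw [div_le_iff₀ hspos] at hr₀1; linarith [mul_comm r₀ s]
  have hω₀ : ω r₀ = 1 := by
    rw [hω r₀ ⟨hr₀pos.le, hr₀2⟩]
    simp
  intro r ⟨hr0, hr1⟩
  rw [hω r ⟨hr0, hr1⟩, hω₀, div_one]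
  set t := |(r - r₀) / (1 - r₀ * r)| with htdef
  have hD : 0 < 1 - r₀ * r := by nlinarith
  have ht0 : 0 ≤ t := abs_nonneg _
  have ht1 : t ≤ 1 := by
    rw [htdef, abs_div, abs_of_pos hD, div_le_one hD, abs_le]
    constructor <;> nlinarith
  have h1 : r - r₀ ≤ t * (1 - r₀ * r) := by
    rw [htdef, abs_div, abs_of_pos hD, div_mul_cancel₀ _ hD.ne']
    exact le_abs_self _
  have hpow : (1 - t) ^ α ≤ 1 - t := by
    rcases eq_or_lt_of_le ht1 with h | h
    · rw [← h]; simp [Real.zero_rpow (by linarith : α ≠ 0)]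
    · calc (1 - t) ^ α ≤ (1 - t) ^ (1:ℝ) :=
            Real.rpow_le_rpow_of_exponent_ge (by linarith) (by linarith) hα
        _ = 1 - t := Real.rpow_one _
  refine le_min (hpow.trans ?_) (hpow.trans ?_)
  · rw [show (2:ℝ) - r / r₀ = (2 * r₀ - r) / r₀ by field_simp, le_div_iff₀ hr₀pos]
    rcases le_or_gt r r₀ with hc | hc
    · nlinarith
    · have haux : 1 ≤ r₀ * (1 + r) := by nlinarith
      nlinarith [mul_nonneg ht0 (by linarith : (0:ℝ) ≤ r₀ * (1 + r) - 1)]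
  · have hden : 0 < s * r + r₀ := by positivity
    rw [le_div_iff₀ hden]
    rcases le_or_gt r r₀ with hc | hc
    · nlinarith [mul_nonneg ht0 hden.le]
    · have hg : 0 ≤ s * (r * r₀ + r - 1) + 1 + r₀ * (1 - r) := by
        nlinarith [mul_nonneg (mul_nonneg hspos.le (sub_nonneg.2 hc.le))
            (by linarith : (0:ℝ) ≤ 1 + r₀),
          mul_le_mul_of_nonneg_right hsr hr₀pos.le]
      have hf : (1 - r) * (1 + r₀) * (s * r + r₀) ≤ (s * r₀ + r) * (1 - r₀ * r) := by
        nlinarith [mul_nonneg (sub_nonneg.2 hc.le) hg]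
      have hA : (1 - t) * (1 - r₀ * r) ≤ (1 - r) * (1 + r₀) := by nlinarith
      nlinarith [mul_le_mul_of_nonneg_right hA hden.le, hf, mul_pos hD hden]
end

section
/- Let f(z) = (3√3/2)(1-a^2)(z-a)/(1-az)^3 with 0 < a < 1/√3. Then sup_{|z|<1} (1-|z|^2)|f(z)| = 1. -/
open Metric

/-! With `A = ‖1 - a z‖` and `B = ‖z - a‖`, the identity `A² - B² = (1 - a²)(1 - ‖z‖²)` turns
`(1 - ‖z‖²)‖f z‖` into `(3√3/2)(A² - B²)B/A³`, which is at most `1` because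
`2A³ - 3√3(A² - B²)B = (√3B - A)²(√3B + 2A)`. Equality holds where `A = √3B`; on the real axis this
is the point `x = (1 + √3a)/(√3 + a)` of the unit disc. -/

noncomputable def akExtremal (a : ℝ) (z : ℂ) : ℂ :=
  (3 * Real.sqrt 3 / 2) * (1 - a ^ 2) * (z - a) / (1 - a * z) ^ 3

theorem norm_one_sub_mul_sq_sub_norm_sub_sq (a : ℝ) (z : ℂ) :
    ‖1 - a * z‖ ^ 2 - ‖z - a‖ ^ 2 = (1 - a ^ 2) * (1 - ‖z‖ ^ 2) := by
  simp only [Complex.sq_norm, Complex.normSq_apply, Complex.sub_re, Complex.sub_im,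
    Complex.mul_re, Complex.mul_im, Complex.one_re, Complex.one_im, Complex.ofReal_re,
    Complex.ofReal_im]
  ring

theorem three_sqrt_three_div_two_mul_sq_sub_sq_mul_le_pow_three {A B : ℝ} (hA : 0 ≤ A)
    (hB : 0 ≤ B) : 3 * √3 / 2 * (A ^ 2 - B ^ 2) * B ≤ A ^ 3 := by
  have h3 : √3 ^ 2 = 3 := Real.sq_sqrt (by norm_num)
  have hfactor :
      2 * A ^ 3 - 3 * √3 * (A ^ 2 - B ^ 2) * B = (√3 * B - A) ^ 2 * (√3 * B + 2 * A) := by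
    linear_combination -√3 * B ^ 3 * h3
  nlinarith [mul_nonneg (sq_nonneg (√3 * B - A)) (by positivity : 0 ≤ √3 * B + 2 * A)]

theorem one_sub_sq_norm_mul_norm_akExtremal {a : ℝ} (ha : |a| ≤ 1) (z : ℂ) :
    (1 - ‖z‖ ^ 2) * ‖akExtremal a z‖ =
      3 * √3 / 2 * (‖1 - a * z‖ ^ 2 - ‖z - a‖ ^ 2) * ‖z - a‖ / ‖1 - a * z‖ ^ 3 := by
  have ha2 : 0 ≤ 1 - a ^ 2 := by nlinarith [sq_abs a, abs_nonneg a]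
  have hc : ‖(3 * √3 / 2 * (1 - a ^ 2) : ℂ)‖ = 3 * √3 / 2 * (1 - a ^ 2) := by
    exact_mod_cast Complex.norm_of_nonneg (by positivity : 0 ≤ 3 * √3 / 2 * (1 - a ^ 2))
  rw [akExtremal, norm_div, norm_mul, hc, norm_pow, norm_one_sub_mul_sq_sub_norm_sub_sq]
  ring

theorem one_sub_sq_norm_mul_norm_akExtremal_le_one {a : ℝ} (ha : |a| ≤ 1) (z : ℂ) :
    (1 - ‖z‖ ^ 2) * ‖akExtremal a z‖ ≤ 1 := by
  rw [one_sub_sq_norm_mul_norm_akExtremal ha]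
  rcases (norm_nonneg (1 - a * z)).eq_or_lt with hA | hA
  · -- at the pole the quotient is the junk value `_ / 0 = 0`
    simp [← hA]
  · rw [div_le_one (by positivity)]
    exact three_sqrt_three_div_two_mul_sq_sub_sq_mul_le_pow_three hA.le (norm_nonneg _)

theorem one_sub_sq_norm_mul_norm_akExtremal_eq_one {a : ℝ} (ha : |a| ≤ 1) {z : ℂ} (hz : z ≠ a)
    (heq : ‖1 - a * z‖ = √3 * ‖z - a‖) : (1 - ‖z‖ ^ 2) * ‖akExtremal a z‖ = 1 := by
  have hB : 0 < ‖z - a‖ := norm_pos_iff.mpr (sub_ne_zero.mpr hz)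
  have h3 : √3 ^ 2 = 3 := Real.sq_sqrt (by norm_num)
  have h3' : √3 ^ 3 = 3 * √3 := by rw [pow_succ, h3]
  rw [one_sub_sq_norm_mul_norm_akExtremal ha, heq, mul_pow, mul_pow, h3, h3']
  field_simp
  ring

theorem isLUB_one_sub_sq_norm_mul_norm_akExtremal {a : ℝ} (ha : |a| < 1) :
    IsLUB ((fun z : ℂ => (1 - ‖z‖ ^ 2) * ‖akExtremal a z‖) '' ball 0 1) 1 := by
  refine ⟨?_, fun y hy => hy ?_⟩
  · rintro _ ⟨z, -, rfl⟩
    exact one_sub_sq_norm_mul_norm_akExtremal_le_one ha.le z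
  obtain ⟨ha₁, ha₂⟩ := abs_lt.mp ha
  have h3 : √3 ^ 2 = 3 := Real.sq_sqrt (by norm_num)
  have hs1 : 1 < √3 := by nlinarith [Real.sqrt_nonneg 3]
  have hden : 0 < √3 + a := by linarith
  set x := (1 + √3 * a) / (√3 + a) with hx
  have hxa : x - a = (1 - a ^ 2) / (√3 + a) := by rw [hx]; field_simp; ring
  have hax : 1 - a * x = √3 * (x - a) := by rw [hx]; field_simp; ring
  have hxa_pos : 0 < x - a := by rw [hxa]; exact div_pos (by nlinarith) hden
  refine ⟨x, ?_, one_sub_sq_norm_mul_norm_akExtremal_eq_one ha.le ?_ ?_⟩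
  · rw [mem_ball_zero_iff, Complex.norm_real, Real.norm_eq_abs, abs_lt, hx,
      lt_div_iff₀ hden, div_lt_one hden]
    constructor <;> nlinarith
  · exact_mod_cast sub_ne_zero.mp hxa_pos.ne'
  · rw [← Complex.ofReal_mul, ← Complex.ofReal_one, ← Complex.ofReal_sub, ← Complex.ofReal_sub,
      Complex.norm_real, Complex.norm_real, Real.norm_eq_abs, Real.norm_eq_abs, hax, abs_mul,
      abs_of_pos hxa_pos, abs_of_pos (by positivity : (0 : ℝ) < √3)]

theorem avkhadiev_kayumov_extremal (a : ℝ) (ha0 : 0 < a) (ha : a < 1 / Real.sqrt 3)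
    (f : ℂ → ℂ)
    (hf : ∀ z : ℂ, f z = (3 * Real.sqrt 3 / 2) * (1 - a ^ 2) * (z - a) / (1 - a * z) ^ 3) :
    IsLUB ((fun z : ℂ => (1 - ‖z‖ ^ 2) * ‖f z‖) '' ball (0 : ℂ) 1) 1 := by
  obtain rfl : f = akExtremal a := funext hf
  have hinv : 1 / √3 < 1 := by
    rw [div_lt_one (by positivity), Real.lt_sqrt zero_le_one]; norm_num
  exact isLUB_one_sub_sq_norm_mul_norm_akExtremal (abs_lt.mpr ⟨by linarith, by linarith⟩)
end
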